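/- arXiv:1712.09230 — 2 statements merged into one kernel-verified Lean document; each statement's English description precedes it below -/
import Mathlib

section
/- Filtering criterion with respect to a fixed pile: let 1 ≤ y ≤ n and let i ≥ 1 be such that the set {x < y : L(x) = i} is nonempty, and let x be the largest index less than y with L(x) = i (so σ(x) is the top of pile P_i when σ(y) is processed). If σ(y) > σ(x) then L(y) > i, and if σ(y) ≤ σ(x) and L(y) ≠ i then L(y) < i. -/
/-- `l` is the index list of a (strictly) increasing subsequence of `σ`. -/
def IsIncSubseq {n : ℕ} (σ : Fin n → ℤ) (l : List (Fin n)) : Prop :=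
  l.Chain' (fun i j => i < j ∧ σ i < σ j)

/-- Length of a longest increasing subsequence of `σ`. -/
noncomputable def lis {n : ℕ} (σ : Fin n → ℤ) : ℕ :=
  sSup {m | ∃ l : List (Fin n), IsIncSubseq σ l ∧ l.length = m}

/-- Length of a longest increasing subsequence of `σ` ending at index `i`. -/
noncomputable def L {n : ℕ} (σ : Fin n → ℤ) (i : Fin n) : ℕ :=
  sSup {m | ∃ l : List (Fin n), IsIncSubseq σ l ∧ l.getLast? = some i ∧ l.length = m}

/-- Length of a longest increasing subsequence of `σ` starting at index `i`. -/
noncomputable def R {n : ℕ} (σ : Fin n → ℤ) (i : Fin n) : ℕ :=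
  sSup {m | ∃ l : List (Fin n), IsIncSubseq σ l ∧ l.head? = some i ∧ l.length = m}


/-!
A longest increasing subsequence ending at `x` extends by any later `y` with `σ x < σ y`, so
`L` strictly increases along such pairs; this gives the first claim. Conversely, walking back
along a longest increasing subsequence ending at `y` shows that every value `1 ≤ k < L σ y` is
`L σ z` for some `z < y` with `σ z < σ y`. If `σ y ≤ σ x` and `L σ y > i`, such a `z` with
`L σ z = i` satisfies `z ≤ x` by maximality of `x`, and `σ z < σ x` then contradicts either
`z = x` or the strict monotonicity `L σ z < L σ x = i`.
-/

section

variable {n : ℕ} (σ : Fin n → ℤ)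

theorem IsIncSubseq.length_le {l : List (Fin n)} (hl : IsIncSubseq σ l) : l.length ≤ n := by
  have hsorted : l.Pairwise (· < ·) :=
    List.isChain_iff_pairwise.mp (List.IsChain.imp (fun _ _ h => h.1) hl)
  simpa using hsorted.nodup.length_le_card

theorem bddAbove_lengths_ending_at (y : Fin n) :
    BddAbove {m | ∃ l : List (Fin n), IsIncSubseq σ l ∧ l.getLast? = some y ∧ l.length = m} :=
  ⟨n, by rintro m ⟨l, hl, -, rfl⟩; exact hl.length_le σ⟩

theorem length_le_L {l : List (Fin n)} {y : Fin n} (hl : IsIncSubseq σ l)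
    (hy : l.getLast? = some y) : l.length ≤ L σ y :=
  le_csSup (bddAbove_lengths_ending_at σ y) ⟨l, hl, hy, rfl⟩

theorem exists_isIncSubseq_length_eq_L (y : Fin n) :
    ∃ l : List (Fin n), IsIncSubseq σ l ∧ l.getLast? = some y ∧ l.length = L σ y :=
  Nat.sSup_mem (s := {m | ∃ l, IsIncSubseq σ l ∧ l.getLast? = some y ∧ l.length = m})
    ⟨1, [y], List.isChain_singleton _, rfl, rfl⟩ (bddAbove_lengths_ending_at σ y)

theorem one_le_L (y : Fin n) : 1 ≤ L σ y :=
  length_le_L σ (l := [y]) (List.isChain_singleton _) rfl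

theorem L_lt_L {x y : Fin n} (hxy : x < y) (hσ : σ x < σ y) : L σ x < L σ y := by
  obtain ⟨l, hl, hlast, hlen⟩ := exists_isIncSubseq_length_eq_L σ x
  have hext : IsIncSubseq σ (l ++ [y]) :=
    hl.append (List.isChain_singleton _) (by simp_all)
  simpa [hlen] using length_le_L σ hext List.getLast?_concat

theorem exists_L_add_one_eq {y : Fin n} (hy : 2 ≤ L σ y) :
    ∃ z, z < y ∧ σ z < σ y ∧ L σ z + 1 = L σ y := by
  obtain ⟨l, hl, hlast, hlen⟩ := exists_isIncSubseq_length_eq_L σ y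
  obtain ⟨l', rfl⟩ := List.getLast?_eq_some_iff.mp hlast
  obtain rfl | ⟨l₀, z, rfl⟩ := l'.eq_nil_or_concat
  · simp only [List.nil_append, List.length_singleton] at hlen; omega
  rw [List.concat_eq_append] at hl hlen
  obtain ⟨hl', -, hjoin⟩ := List.isChain_append.mp hl
  have hzy : z < y ∧ σ z < σ y := hjoin z (by simp) y (by simp)
  have hz : (l₀ ++ [z]).length ≤ L σ z := length_le_L σ hl' List.getLast?_concat
  have hLzy : L σ z < L σ y := L_lt_L σ hzy.1 hzy.2
  simp only [List.length_append, List.length_singleton] at hlen hz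
  exact ⟨z, hzy.1, hzy.2, by omega⟩

theorem exists_L_eq_of_lt_L {k : ℕ} (hk : 1 ≤ k) (y : Fin n) (hky : k < L σ y) :
    ∃ z, z < y ∧ σ z < σ y ∧ L σ z = k := by
  induction y using WellFoundedLT.induction with
  | _ y ih =>
    obtain ⟨z, hzy, hσz, hLz⟩ := exists_L_add_one_eq σ (by omega : 2 ≤ L σ y)
    rcases (show k ≤ L σ z by omega).eq_or_lt with rfl | hkz
    · exact ⟨z, hzy, hσz, rfl⟩
    · obtain ⟨w, hwz, hσw, hLw⟩ := ih z hzy hkz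
      exact ⟨w, hwz.trans hzy, hσw.trans hσz, hLw⟩

end

theorem filtering_criterion_general {n : ℕ} (σ : Fin n → ℤ) (y : Fin n) (i : ℕ)
    (x : Fin n) (hxy : x < y) (hxi : L σ x = i)
    (hmax : ∀ x' : Fin n, x' < y → L σ x' = i → x' ≤ x) :
    (σ x < σ y → i < L σ y) ∧ (σ y ≤ σ x → L σ y ≠ i → L σ y < i) := by
  refine ⟨fun hσ => hxi ▸ L_lt_L σ hxy hσ, fun hσ hne => ?_⟩
  by_contra! hge
  obtain ⟨z, hzy, hσz, hLz⟩ :=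
    exists_L_eq_of_lt_L σ (hxi ▸ one_le_L σ x) y (hge.lt_of_ne' hne)
  have hσzx : σ z < σ x := hσz.trans_le hσ
  rcases (hmax z hzy hLz).lt_or_eq with hzx | rfl
  · exact (L_lt_L σ hzx hσzx).ne (hLz.trans hxi.symm)
  · exact hσzx.false

/-- Filtering criterion with respect to a fixed pile: let `x` be the largest index
before `y` lying in pile `i` (so `σ x` is the top of pile `P_i` when `σ y` is
processed). If `σ y > σ x` then `L σ y > i`; if `σ y ≤ σ x` and `L σ y ≠ i`,
then `L σ y < i`. -/
theorem filtering_criterion {n : ℕ} (σ : Fin n → ℤ) (y : Fin n) (i : ℕ) (hi : 1 ≤ i)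
    (x : Fin n) (hxy : x < y) (hxi : L σ x = i)
    (hmax : ∀ x' : Fin n, x' < y → L σ x' = i → x' ≤ x) :
    (σ x < σ y → i < L σ y) ∧ (σ y ≤ σ x → L σ y ≠ i → L σ y < i) :=
  filtering_criterion_general σ y i x hxy hxi hmax
end

section
/- Under the hypotheses of the splitting lemma (σ(j) is the k-th element of some longest increasing subsequence of σ, σ_L is the subsequence of ⟨σ(1),…,σ(j−1)⟩ of elements smaller than σ(j), and σ_R is the subsequence of ⟨σ(j+1),…,σ(n)⟩ of elements larger than σ(j)), one has lis(σ_L) ≥ k − 1 and lis(σ_R) ≥ lis(σ) − k, hence lis(σ_L) + lis(σ_R) + 1 ≥ lis(σ). -/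
/-- Length of a longest strictly increasing subsequence of a list of integers. -/
noncomputable def lisL (l : List ℤ) : ℕ :=
  sSup {m | ∃ t : List ℤ, t.Sublist l ∧ t.Pairwise (· < ·) ∧ t.length = m}

namespace List

theorem take_finRange (n m : ℕ) :
    (finRange n).take m = (finRange n).filter (fun i => i.val < m) := by
  conv_rhs => rw [← take_append_drop m (finRange n)]
  rw [filter_append, filter_eq_self.mpr, filter_eq_nil_iff.mpr, append_nil]
  · intro i hi
    obtain ⟨p, hp, rfl⟩ := mem_iff_getElem.mp hi
    simp
  · intro i hi
    obtain ⟨p, hp, rfl⟩ := mem_take_iff_getElem.mp hi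
    simpa using (lt_min_iff.mp hp).1

theorem drop_finRange (n m : ℕ) :
    (finRange n).drop m = (finRange n).filter (fun i => m ≤ i.val) := by
  conv_rhs => rw [← take_append_drop m (finRange n)]
  rw [filter_append, filter_eq_nil_iff.mpr, filter_eq_self.mpr, nil_append]
  · intro i hi
    obtain ⟨p, hp, rfl⟩ := mem_iff_getElem.mp hi
    simp
  · intro i hi
    obtain ⟨p, hp, rfl⟩ := mem_take_iff_getElem.mp hi
    simpa using (lt_min_iff.mp hp).1

theorem Pairwise.sublist_finRange {n : ℕ} {is : List (Fin n)} (h : is.Pairwise (· < ·)) :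
    is <+ finRange n :=
  sublist_of_subperm_of_pairwise (h.nodup.subperm fun i _ => mem_finRange i) h
    (pairwise_lt_finRange n)

theorem Pairwise.rel_getElem_of_mem_take_drop {α : Type*} {r : α → α → Prop} {l : List α}
    (h : l.Pairwise r) {k : ℕ} (hk : k < l.length) :
    (∀ x ∈ l.take k, r x l[k]) ∧ ∀ x ∈ l.drop (k + 1), r l[k] x := by
  rw [← take_append_drop k l, drop_eq_getElem_cons hk, pairwise_append, pairwise_cons] at h
  exact ⟨fun x hx => h.2.2 x hx _ mem_cons_self, h.2.1.1⟩

theorem filter_take_ofFn {α : Type*} {n : ℕ} (σ : Fin n → α) (m : ℕ) (p : α → Bool) :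
    ((ofFn σ).take m).filter p =
      ((finRange n).filter (fun i => p (σ i) && i.val < m)).map σ := by
  rw [ofFn_eq_map, ← map_take, take_finRange, filter_map, filter_filter]
  rfl

theorem filter_drop_ofFn {α : Type*} {n : ℕ} (σ : Fin n → α) (m : ℕ) (p : α → Bool) :
    ((ofFn σ).drop m).filter p =
      ((finRange n).filter (fun i => p (σ i) && m ≤ i.val)).map σ := by
  rw [ofFn_eq_map, ← map_drop, drop_finRange, filter_map, filter_filter]
  rfl

end List

theorem IsIncSubseq.pairwise {n : ℕ} {σ : Fin n → ℤ} {l : List (Fin n)}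
    (h : IsIncSubseq σ l) :
    l.Pairwise (fun i j => i < j ∧ σ i < σ j) :=
  have : IsTrans (Fin n) (fun i j => i < j ∧ σ i < σ j) :=
    ⟨fun _ _ _ hab hbc => ⟨hab.1.trans hbc.1, hab.2.trans hbc.2⟩⟩
  List.isChain_iff_pairwise.mp h

theorem length_le_lisL {s t : List ℤ} (hts : t.Sublist s) (ht : t.Pairwise (· < ·)) :
    t.length ≤ lisL s :=
  le_csSup ⟨s.length, by rintro _ ⟨t', hts', -, rfl⟩; exact hts'.length_le⟩
    ⟨t, hts, ht, rfl⟩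

theorem length_le_lisL_map_filter_finRange {n : ℕ} {σ : Fin n → ℤ} {is : List (Fin n)}
    (h : is.Pairwise (fun i j => i < j ∧ σ i < σ j)) {p : Fin n → Bool}
    (hp : ∀ i ∈ is, p i) :
    is.length ≤ lisL (((List.finRange n).filter p).map σ) := by
  have hsub := ((h.imp And.left).sublist_finRange.filter p).map σ
  rw [List.filter_eq_self.mpr hp] at hsub
  simpa using length_le_lisL hsub (List.pairwise_map.mpr (h.imp And.right))

/-- Under the hypotheses of the splitting lemma (`σ j` is the `(k+1)`-st element of
some longest increasing subsequence of `σ`, `σL` is the subsequence of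
`⟨σ 0, …, σ (j-1)⟩` of elements smaller than `σ j`, and `σR` is the subsequence of
`⟨σ (j+1), …, σ (n-1)⟩` of elements larger than `σ j`), one has `lisL σL ≥ k` and
`lisL σR ≥ lis σ - (k + 1)` (with 0-indexed `k`), hence
`lisL σL + lisL σR + 1 ≥ lis σ`. -/
theorem splitting_lower_bounds {n : ℕ} (σ : Fin n → ℤ) (l : List (Fin n))
    (hl : IsIncSubseq σ l) (hlen : l.length = lis σ)
    (k : Fin l.length) (j : Fin n) (hj : l.get k = j)
    (σL σR : List ℤ)
    (hσL : σL = ((List.ofFn σ).take j.val).filter (fun a => a < σ j))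
    (hσR : σR = ((List.ofFn σ).drop (j.val + 1)).filter (fun a => σ j < a)) :
    (k : ℕ) ≤ lisL σL ∧ lis σ - ((k : ℕ) + 1) ≤ lisL σR ∧
      lis σ ≤ lisL σL + lisL σR + 1 := by
  obtain ⟨hbefore, hafter⟩ := hl.pairwise.rel_getElem_of_mem_take_drop k.isLt
  rw [List.get_eq_getElem] at hj
  rw [hj] at hbefore hafter
  have hL : (k : ℕ) ≤ lisL σL := by
    have := length_le_lisL_map_filter_finRange (hl.pairwise.sublist (List.take_sublist k l))
      (p := fun i => σ i < σ j && i.val < j.val)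
      fun i hi => by simpa [and_comm] using hbefore i hi
    rw [List.length_take_of_le k.isLt.le] at this
    rwa [hσL, List.filter_take_ofFn]
  have hR : lis σ - ((k : ℕ) + 1) ≤ lisL σR := by
    have := length_le_lisL_map_filter_finRange
      (hl.pairwise.sublist (List.drop_sublist (k + 1) l))
      (p := fun i => σ j < σ i && j.val + 1 ≤ i.val)
      fun i hi => by simpa [and_comm] using hafter i hi
    rw [List.length_drop] at this
    rwa [hσR, List.filter_drop_ofFn, ← hlen]
  exact ⟨hL, hR, by omega⟩
end
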